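/- Let u, v ∈ ℝ^d be unit vectors with θ(u,v) ≤ β for some β > 0, and let x ∈ ℝ^d be nonzero with |φ(x,u)| > β. Then ⟨u,x⟩·⟨v,x⟩ > 0 (in particular sgn(⟨u,x⟩) = sgn(⟨v,x⟩)), and |φ(x,v)| ≤ 2·|φ(x,u)|. -/

import Mathlib

/-!
By the triangle inequality for angles, `φ(x, ·)` changes by at most `θ(u, v) ≤ β` from `u` to
`v`, which is less than `|φ(x, u)|`. Hence `φ(x, u)` and `φ(x, v)` have the same strict sign and
`|φ(x, v)| ≤ |φ(x, u)| + β < 2 |φ(x, u)|`; and `⟨w, x⟩` has the sign of `φ(x, w)` because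
`θ(x, w) = arccos (⟨x, w⟩ / (‖x‖ ‖w‖))`.
-/

open scoped RealInnerProductSpace

/-- The signed margin angle `φ(x,w) = π/2 − θ(x,w)` of a point `x` with respect to a
hyperplane with unit normal `w`. -/
noncomputable def phi {d : ℕ} (x w : EuclideanSpace ℝ (Fin d)) : ℝ :=
  Real.pi / 2 - InnerProductGeometry.angle x w

open Real InnerProductGeometry

theorem mul_pos_of_abs_sub_lt_abs {α : Type*} [CommRing α] [LinearOrder α]
    [IsStrictOrderedRing α] {a b : α} (h : |b - a| < |a|) : 0 < a * b := by
  rcases lt_trichotomy a 0 with ha | rfl | ha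
  · rw [abs_of_neg ha] at h
    nlinarith [(abs_lt.mp h).2]
  · exact absurd h (by simp)
  · rw [abs_of_pos ha] at h
    nlinarith [(abs_lt.mp h).1]

namespace InnerProductGeometry

variable {V : Type*} [NormedAddCommGroup V] [InnerProductSpace ℝ V]

theorem abs_angle_sub_angle_le (x y z : V) : |angle x y - angle x z| ≤ angle y z := by
  rw [abs_sub_le_iff]
  constructor
  · linarith [angle_le_angle_add_angle x z y, angle_comm z y]
  · linarith [angle_le_angle_add_angle x y z]

theorem inner_pos_iff_angle_lt_pi_div_two {x y : V} : 0 < ⟪x, y⟫ ↔ angle x y < π / 2 := by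
  rw [angle, arccos_lt_pi_div_two]
  constructor
  · intro h
    exact div_pos h (h.trans_le (real_inner_le_norm x y))
  · intro h
    by_contra! hle
    exact h.not_ge (div_nonpos_of_nonpos_of_nonneg hle (by positivity))

theorem inner_neg_iff_pi_div_two_lt_angle {x y : V} : ⟪x, y⟫ < 0 ↔ π / 2 < angle x y := by
  rw [← neg_pos, ← inner_neg_right, inner_pos_iff_angle_lt_pi_div_two, angle_neg_right]
  constructor <;> intro h <;> linarith

end InnerProductGeometry

section

variable {d : ℕ}

theorem abs_phi_sub_phi_le (x u v : EuclideanSpace ℝ (Fin d)) :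
    |phi x v - phi x u| ≤ angle u v := by
  simpa only [phi, sub_sub_sub_cancel_left] using abs_angle_sub_angle_le x u v

theorem inner_pos_iff_phi_pos {w x : EuclideanSpace ℝ (Fin d)} :
    0 < ⟪w, x⟫ ↔ 0 < phi x w := by
  rw [real_inner_comm, inner_pos_iff_angle_lt_pi_div_two, phi, sub_pos]

theorem inner_neg_iff_phi_neg {w x : EuclideanSpace ℝ (Fin d)} :
    ⟪w, x⟫ < 0 ↔ phi x w < 0 := by
  rw [real_inner_comm, inner_neg_iff_pi_div_two_lt_angle, phi, sub_neg]

end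

theorem stmt_9 (d : ℕ) (u v x : EuclideanSpace ℝ (Fin d)) (β : ℝ)
    (hangle : InnerProductGeometry.angle u v ≤ β)
    (hmargin : β < |phi x u|) :
    0 < ⟪u, x⟫ * ⟪v, x⟫ ∧
    Real.sign ⟪u, x⟫ = Real.sign ⟪v, x⟫ ∧
    |phi x v| ≤ 2 * |phi x u| := by
  have hclose : |phi x v - phi x u| < |phi x u| :=
    ((abs_phi_sub_phi_le x u v).trans hangle).trans_lt hmargin
  have hbound : |phi x v| ≤ 2 * |phi x u| := by
    linarith [abs_sub_abs_le_abs_sub (phi x v) (phi x u)]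
  rcases pos_and_pos_or_neg_and_neg_of_mul_pos (mul_pos_of_abs_sub_lt_abs hclose) with
    ⟨hu, hv⟩ | ⟨hu, hv⟩
  · rw [← inner_pos_iff_phi_pos] at hu hv
    exact ⟨mul_pos hu hv, by rw [Real.sign_of_pos hu, Real.sign_of_pos hv], hbound⟩
  · rw [← inner_neg_iff_phi_neg] at hu hv
    exact ⟨mul_pos_of_neg_of_neg hu hv, by rw [Real.sign_of_neg hu, Real.sign_of_neg hv],
      hbound⟩
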